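/- arXiv:1309.2605 — 2 statements merged into one kernel-verified Lean document; each statement's English description precedes it below -/
import Mathlib

section
/- Let n be a positive integer and let D(x₁,…,xₙ) be a polynomial with integer coefficients such that the set of tuples (x₁,…,xₙ) ∈ ℤⁿ with D(x₁,…,xₙ) = 0 is nonempty and finite, and let d denote the maximal height of an integer solution of D(x₁,…,xₙ) = 0. Then the set of tuples (x₁,…,xₙ,s₁,s₂,s₃,s₄,t₁,t₂,t₃,t₄) ∈ ℤⁿ⁺⁸ satisfying D(x₁,…,xₙ)² + (x₁²+…+xₙ² − s₁²−s₂²−s₃²−s₄² − t₁²−t₂²−t₃²−t₄²)² = 0 is finite and its cardinality is strictly greater than d. -/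
/-!
Since `D² + E² = 0` forces `D = E = 0`, the new solutions are the pairs `(x, y)` with `D(x) = 0`
and `|x|² = |y|²` for `y ∈ ℤ⁸`. Over each of the finitely many roots `x` only finitely many `y`
lie on the sphere `|y|² = |x|²`, so there are finitely many solutions. For the lower bound take a
root `x₀` of height `d` and put `M = |x₀|² ≥ d² ≥ d`. By Lagrange's four squares theorem, for
every `k ≤ M` both `k` and `M - k` are sums of four squares, so some `y` with `|y|² = M` has its
first four squares summing to `k`: these are `M + 1 > d` distinct solutions over `x₀`.
-/

open MvPolynomial Finset

lemma sq_add_sq_eq_zero_iff {R : Type*} [CommRing R] [LinearOrder R] [IsStrictOrderedRing R]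
    {a b : R} : a ^ 2 + b ^ 2 = 0 ↔ a = 0 ∧ b = 0 := by
  simpa only [sq] using mul_self_add_mul_self_eq_zero

lemma exists_sum_four_sq_eq (k : ℕ) : ∃ a : Fin 4 → ℤ, ∑ i, a i ^ 2 = k := by
  obtain ⟨a, b, c, d, h⟩ := Nat.sum_four_squares k
  exact ⟨![a, b, c, d], by simp [Fin.sum_univ_four]; exact_mod_cast h⟩

section SumOfSquares

variable {ι : Type*} [Fintype ι]

lemma finite_setOf_sum_sq_eq (B : ℤ) : {y : ι → ℤ | ∑ j, y j ^ 2 = B}.Finite := by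
  refine (Set.Finite.pi fun _ => Set.finite_Icc (-B) B).subset fun y (hy : _ = B) j _ => ?_
  have hsq : y j ^ 2 ≤ B := hy ▸ single_le_sum (fun k _ => sq_nonneg (y k)) (mem_univ j)
  have habs : |y j| ≤ y j ^ 2 := Int.abs_eq_natAbs (y j) ▸ Int.natAbs_le_self_sq (y j)
  exact abs_le.mp (habs.trans hsq)

lemma finite_setOf_fst_mem_and_sum_sq_eq {κ : Type*} [Fintype κ] {Z : Set (ι → ℤ)}
    (hZ : Z.Finite) :
    {p : (ι → ℤ) × (κ → ℤ) | p.1 ∈ Z ∧ ∑ i, p.1 i ^ 2 = ∑ j, p.2 j ^ 2}.Finite := by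
  refine (hZ.biUnion fun x _ => (finite_setOf_sum_sq_eq (∑ i, x i ^ 2)).image (Prod.mk x)).subset ?_
  rintro ⟨x, y⟩ ⟨hx, hxy⟩
  exact Set.mem_biUnion hx ⟨y, hxy.symm, rfl⟩

lemma sup_natAbs_le_sum_natAbs_sq (x : ι → ℤ) :
    univ.sup (fun i => (x i).natAbs) ≤ ∑ i, (x i).natAbs ^ 2 :=
  Finset.sup_le fun _ hi =>
    (Nat.le_self_pow two_ne_zero _).trans
      (single_le_sum (f := fun i => (x i).natAbs ^ 2) (fun _ _ => Nat.zero_le _) hi)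

end SumOfSquares

lemma succ_le_ncard_setOf_sum_eight_sq_eq (M : ℕ) :
    M + 1 ≤ {y : Fin 8 → ℤ | ∑ j, y j ^ 2 = M}.ncard := by
  set S := {y : Fin 8 → ℤ | ∑ j, y j ^ 2 = M}
  let firstFour : (Fin 8 → ℤ) → ℕ := fun y => (∑ i : Fin 4, y (Fin.castAdd 4 i) ^ 2).toNat
  have hsurj : Set.Iic M ⊆ firstFour '' S := by
    intro k (hk : k ≤ M)
    obtain ⟨a, ha⟩ := exists_sum_four_sq_eq k
    obtain ⟨b, hb⟩ := exists_sum_four_sq_eq (M - k)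
    refine ⟨Fin.append a b, ?_, by simp [firstFour, ha]⟩
    show ∑ j : Fin (4 + 4), _ = _
    rw [Fin.sum_univ_add]
    simp only [Fin.append_left, Fin.append_right, ha, hb]
    rw [← Nat.cast_add, Nat.add_sub_cancel' hk]
  calc M + 1 = (Set.Iic M).ncard := by simp
    _ ≤ (firstFour '' S).ncard := Set.ncard_le_ncard hsurj ((finite_setOf_sum_sq_eq _).image _)
    _ ≤ S.ncard := Set.ncard_image_le (finite_setOf_sum_sq_eq _)

theorem stmt0_general (n : ℕ) (D : MvPolynomial (Fin n) ℤ)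
    (hfin : {x : Fin n → ℤ | eval x D = 0}.Finite)
    (d : ℕ)
    (hd : IsGreatest
      ((fun x : Fin n → ℤ => Finset.univ.sup fun i => (x i).natAbs) ''
        {x : Fin n → ℤ | eval x D = 0}) d) :
    {p : (Fin n → ℤ) × (Fin 8 → ℤ) |
        (eval p.1 D) ^ 2 + ((∑ i, p.1 i ^ 2) - ∑ j, p.2 j ^ 2) ^ 2 = 0}.Finite ∧
    d < {p : (Fin n → ℤ) × (Fin 8 → ℤ) |
        (eval p.1 D) ^ 2 + ((∑ i, p.1 i ^ 2) - ∑ j, p.2 j ^ 2) ^ 2 = 0}.ncard := by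
  set Z := {x : Fin n → ℤ | eval x D = 0}
  have hS : {p : (Fin n → ℤ) × (Fin 8 → ℤ) |
      (eval p.1 D) ^ 2 + ((∑ i, p.1 i ^ 2) - ∑ j, p.2 j ^ 2) ^ 2 = 0} =
      {p | p.1 ∈ Z ∧ ∑ i, p.1 i ^ 2 = ∑ j, p.2 j ^ 2} := by
    ext p
    simp [Z, sq_add_sq_eq_zero_iff, sub_eq_zero]
  rw [hS]
  have hSfin := finite_setOf_fst_mem_and_sum_sq_eq (κ := Fin 8) hfin
  refine ⟨hSfin, ?_⟩
  obtain ⟨x₀, hx₀, hx₀d⟩ := hd.1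
  set M := ∑ i, (x₀ i).natAbs ^ 2
  have hfiber : Prod.mk x₀ '' {y : Fin 8 → ℤ | ∑ j, y j ^ 2 = M} ⊆
      {p | p.1 ∈ Z ∧ ∑ i, p.1 i ^ 2 = ∑ j, p.2 j ^ 2} := by
    rintro _ ⟨y, hy : _ = _, rfl⟩
    exact ⟨hx₀, by simp [M, hy]⟩
  calc d ≤ M := hx₀d ▸ sup_natAbs_le_sum_natAbs_sq x₀
    _ < M + 1 := M.lt_succ_self
    _ ≤ _ := succ_le_ncard_setOf_sum_eight_sq_eq M
    _ = _ := (Set.ncard_image_of_injective _ (Prod.mk_right_injective x₀)).symm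
    _ ≤ _ := Set.ncard_le_ncard hfiber hSfin

/-- If the integer solution set of `D = 0` is nonempty and finite with
maximal height `d`, then the integer solution set of
`D² + (x₁²+…+xₙ² − s₁²−…−s₄² − t₁²−…−t₄²)² = 0` is finite and has more than `d` elements. -/
theorem stmt0 (n : ℕ) (hn : 0 < n) (D : MvPolynomial (Fin n) ℤ)
    (hne : {x : Fin n → ℤ | eval x D = 0}.Nonempty)
    (hfin : {x : Fin n → ℤ | eval x D = 0}.Finite)
    (d : ℕ)
    (hd : IsGreatest
      ((fun x : Fin n → ℤ => Finset.univ.sup fun i => (x i).natAbs) ''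
        {x : Fin n → ℤ | eval x D = 0}) d) :
    {p : (Fin n → ℤ) × (Fin 8 → ℤ) |
        (eval p.1 D) ^ 2 + ((∑ i, p.1 i ^ 2) - ∑ j, p.2 j ^ 2) ^ 2 = 0}.Finite ∧
    d < {p : (Fin n → ℤ) × (Fin 8 → ℤ) |
        (eval p.1 D) ^ 2 + ((∑ i, p.1 i ^ 2) - ∑ j, p.2 j ^ 2) ^ 2 = 0}.ncard :=
  stmt0_general n D hfin d hd
end

section
/- There is no finite-fold Diophantine representation of the function f. That is, there do not exist r ∈ ℕ and a polynomial W ∈ ℤ[x₁, x₂, y₁,…,y_r] such that both: (i) for all a, b ∈ ℕ, (a ≥ 1 and b = f(a)) holds if and only if there exist y₁,…,y_r ∈ ℕ with W(a, b, y₁,…,y_r) = 0, and (ii) for every (a, b) ∈ ℕ² the set {(y₁,…,y_r) ∈ ℕʳ : W(a, b, y₁,…,y_r) = 0} is finite. -/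
/-- A system `S ⊆ E_n`, encoded by the set `eqOne` of indices `i` carrying the
equation `x_i = 1`, and the sets `addEq`, `mulEq` of triples `(i, j, k)` carrying
the equations `x_i + x_j = x_k` and `x_i · x_j = x_k` respectively. -/
structure SystemEn (n : ℕ) where
  eqOne : Finset (Fin n)
  addEq : Finset (Fin n × Fin n × Fin n)
  mulEq : Finset (Fin n × Fin n × Fin n)

/-- A tuple `x` solves the system `S` if it satisfies all equations of `S`. -/
def SystemEn.Solves {n : ℕ} {R : Type*} [Semiring R] (S : SystemEn n) (x : Fin n → R) : Prop :=
  (∀ i ∈ S.eqOne, x i = 1) ∧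
  (∀ t ∈ S.addEq, x t.1 + x t.2.1 = x t.2.2) ∧
  (∀ t ∈ S.mulEq, x t.1 * x t.2.1 = x t.2.2)

/-- `fBound n` is the smallest non-negative integer `b` such that for each system
`S ⊆ E_n` with a finite number of solutions in integers `x₁, …, xₙ`, all these
solutions belong to `[-b, b]ⁿ`. -/
noncomputable def fBound (n : ℕ) : ℕ :=
  sInf {b : ℕ | ∀ S : SystemEn n, {x : Fin n → ℤ | S.Solves x}.Finite →
    ∀ x : Fin n → ℤ, S.Solves x → ∀ i, |x i| ≤ (b : ℤ)}

/-- `gBound n` is the greatest finite total number of solutions of a subsystem of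
`E_n` in integers `x₁, …, xₙ`. -/
noncomputable def gBound (n : ℕ) : ℕ :=
  sSup {c : ℕ | ∃ S : SystemEn n, {x : Fin n → ℤ | S.Solves x}.Finite ∧
    {x : Fin n → ℤ | S.Solves x}.ncard = c}

open MvPolynomial

/-!
Suppose `W` were a finite-fold representation of `f`, and write `n = q * q + s` with
`q = ⌊√n⌋`. Split `W = P - Q` with `P`, `Q` built from `0`, `1`, `+`, `·`, and substitute `n`
and, for `b` and the `y_j`, sums of four squares of integer variables `v` (by Lagrange these sums
reach every natural number). The subterms of the resulting terms, with the equations computing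
each node from its children and `P + 0 = Q`, form a subsystem of `E_m` with `m ≤ C + q + s`, as
`n` costs only `O(q + s)` nodes. Its solutions are determined by `v`, and finite-foldness leaves
finitely many `v`, one of which has `b = f(n)`. Hence `f(n) ≤ f(C + q + s)` with `C + q + s < n`
for large `n`, so the monotone `f` would be bounded, whereas the chain `1, 1 + 1, 1 + 1 + 1, …`
shows `k ≤ f(k + 2)`.
-/

inductive Eqn (γ : Type*) where
  | one (i : γ)
  | add (i j k : γ)
  | mul (i j k : γ)

namespace Eqn

variable {γ δ : Type*}

def Holds (x : γ → ℤ) : Eqn γ → Prop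
  | one i => x i = 1
  | add i j k => x i + x j = x k
  | mul i j k => x i * x j = x k

def map (f : γ → δ) : Eqn γ → Eqn δ
  | one i => one (f i)
  | add i j k => add (f i) (f j) (f k)
  | mul i j k => mul (f i) (f j) (f k)

@[simp]
lemma holds_map (f : γ → δ) (x : δ → ℤ) (e : Eqn γ) : (e.map f).Holds x ↔ e.Holds (x ∘ f) := by
  cases e <;> rfl

def solutions (S : Set (Eqn γ)) : Set (γ → ℤ) := {x | ∀ e ∈ S, e.Holds x}

lemma solutions_union (S S' : Set (Eqn γ)) :
    solutions (S ∪ S') = solutions S ∩ solutions S' := by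
  ext x
  simp only [solutions, Set.mem_union, Set.mem_inter_iff, Set.mem_ofPred_eq]
  grind

def padSystem {N : ℕ} (ι : γ ↪ Fin N) (S : Set (Eqn γ)) : Set (Eqn (Fin N)) :=
  map ι '' S ∪ {e | ∃ k ∉ Set.range ι, e = one k}

lemma mem_solutions_padSystem_iff {N : ℕ} (ι : γ ↪ Fin N) (S : Set (Eqn γ)) (y : Fin N → ℤ) :
    y ∈ solutions (padSystem ι S) ↔ y ∘ ι ∈ solutions S ∧ ∀ k ∉ Set.range ι, y k = 1 := by
  rw [padSystem, solutions_union, Set.mem_inter_iff]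
  simp only [solutions, Set.forall_mem_image, holds_map, Set.mem_ofPred_eq]
  refine and_congr_right fun _ => ⟨fun h k hk => h _ ⟨k, hk, rfl⟩, ?_⟩
  rintro h _ ⟨k, hk, rfl⟩
  exact h k hk

end Eqn

open Eqn (Holds solutions solutions_union holds_map)

namespace SystemEn

variable {n : ℕ}

def eqns (S : SystemEn n) : Set (Eqn (Fin n)) :=
  {e | match e with
    | .one i => i ∈ S.eqOne
    | .add i j k => (i, j, k) ∈ S.addEq
    | .mul i j k => (i, j, k) ∈ S.mulEq}

open Classical in
noncomputable def ofEqns (S : Set (Eqn (Fin n))) : SystemEn n where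
  eqOne := {i | .one i ∈ S}
  addEq := {t | .add t.1 t.2.1 t.2.2 ∈ S}
  mulEq := {t | .mul t.1 t.2.1 t.2.2 ∈ S}

lemma eqns_ofEqns (S : Set (Eqn (Fin n))) : (ofEqns S).eqns = S := by
  ext e
  cases e <;> simp [ofEqns, eqns]

lemma solves_iff_mem_solutions (S : SystemEn n) (x : Fin n → ℤ) :
    S.Solves x ↔ x ∈ solutions S.eqns := by
  simp only [Solves, solutions, Set.mem_ofPred_eq]
  constructor
  · rintro ⟨h1, h2, h3⟩ (_ | ⟨i, j, k⟩ | ⟨i, j, k⟩) he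
    exacts [h1 _ he, h2 (i, j, k) he, h3 (i, j, k) he]
  · intro h
    exact ⟨fun i hi => h (.one i) hi, fun t ht => h (.add _ _ _) ht,
      fun t ht => h (.mul _ _ _) ht⟩

instance : Finite (SystemEn n) :=
  Finite.of_injective (fun S => (S.eqOne, S.addEq, S.mulEq)) <| by
    rintro ⟨⟩ ⟨⟩ h
    simp_all

end SystemEn

lemma exists_bound_of_finite_solutions (n : ℕ) :
    ∃ b : ℕ, ∀ S : SystemEn n, {x : Fin n → ℤ | S.Solves x}.Finite →
      ∀ x : Fin n → ℤ, S.Solves x → ∀ i, |x i| ≤ (b : ℤ) := by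
  let U := ⋃ S : {S : SystemEn n // {x : Fin n → ℤ | S.Solves x}.Finite},
    {x : Fin n → ℤ | S.1.Solves x}
  have hU : U.Finite := Set.finite_iUnion fun S => S.2
  obtain ⟨b, hb⟩ := (Set.finite_iUnion fun i : Fin n => hU.image fun x => (x i).natAbs).bddAbove
  refine ⟨b, fun S hS x hx i => ?_⟩
  rw [Int.abs_eq_natAbs, Nat.cast_le]
  exact hb (Set.mem_iUnion.2 ⟨i, x, Set.mem_iUnion.2 ⟨⟨S, hS⟩, hx⟩, rfl⟩)

lemma abs_le_fBound {n : ℕ} {S : Set (Eqn (Fin n))} (hS : (solutions S).Finite)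
    {x : Fin n → ℤ} (hx : x ∈ solutions S) (i : Fin n) : |x i| ≤ fBound n := by
  have hsol (y : Fin n → ℤ) : (SystemEn.ofEqns S).Solves y ↔ y ∈ solutions S := by
    rw [SystemEn.solves_iff_mem_solutions, SystemEn.eqns_ofEqns]
  exact Nat.sInf_mem (exists_bound_of_finite_solutions n) (SystemEn.ofEqns S)
    (by simpa only [hsol, Set.ofPred_mem_eq] using hS) x ((hsol x).2 hx) i

lemma abs_le_fBound_of_card_le {γ : Type*} [Fintype γ] {S : Set (Eqn γ)}
    (hS : (solutions S).Finite) {x : γ → ℤ} (hx : x ∈ solutions S) {N : ℕ}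
    (hN : Fintype.card γ ≤ N) (i : γ) : |x i| ≤ fBound N := by
  obtain ⟨ι⟩ := Function.Embedding.nonempty_of_card_le (β := Fin N) (by simpa using hN)
  have hpad := Eqn.mem_solutions_padSystem_iff ι S
  have hS' : (solutions (Eqn.padSystem ι S)).Finite := by
    refine Set.Finite.of_finite_image (f := fun y => y ∘ ι) (hS.subset ?_) ?_
    · rintro _ ⟨y, hy, rfl⟩
      exact ((hpad y).1 hy).1
    · intro y hy y' hy' h
      rw [hpad] at hy hy'
      funext k
      by_cases hk : k ∈ Set.range ι
      · obtain ⟨j, rfl⟩ := hk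
        exact congrFun h j
      · rw [hy.2 k hk, hy'.2 k hk]
  have hext : Function.extend ι x 1 ∈ solutions (Eqn.padSystem ι S) := by
    refine (hpad _).2 ⟨?_, fun k hk => Function.extend_apply' _ _ _ hk⟩
    rwa [Function.extend_comp ι.injective]
  simpa [ι.injective.extend_apply] using abs_le_fBound hS' hext (ι i)

lemma fBound_mono : Monotone fBound := by
  intro m n hmn
  refine Nat.sInf_le fun S hS x hx i => ?_
  simp only [SystemEn.solves_iff_mem_solutions, Set.ofPred_mem_eq] at hS hx
  exact abs_le_fBound_of_card_le hS hx (by simpa using hmn) i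

inductive PolyTerm (σ : Type*) where
  | zero
  | one
  | var (s : σ)
  | add (a b : PolyTerm σ)
  | mul (a b : PolyTerm σ)
  deriving DecidableEq

namespace PolyTerm

section Eval

variable {σ τ : Type*}

def eval (v : σ → ℤ) : PolyTerm σ → ℤ
  | zero => 0
  | one => 1
  | var s => v s
  | add a b => a.eval v + b.eval v
  | mul a b => a.eval v * b.eval v

def subst (G : σ → PolyTerm τ) : PolyTerm σ → PolyTerm τ
  | zero => zero
  | one => one
  | var s => G s
  | add a b => add (a.subst G) (b.subst G)
  | mul a b => mul (a.subst G) (b.subst G)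

lemma eval_subst (G : σ → PolyTerm τ) (v : τ → ℤ) (t : PolyTerm σ) :
    (t.subst G).eval v = t.eval fun s => (G s).eval v := by
  induction t <;> simp_all [subst, eval]

def ofNat : ℕ → PolyTerm σ
  | 0 => zero
  | k + 1 => add (ofNat k) one

lemma eval_ofNat (v : σ → ℤ) (k : ℕ) : (ofNat k : PolyTerm σ).eval v = k := by
  induction k <;> simp_all [ofNat, eval]

lemma exists_eval_eq_sub (W : MvPolynomial σ ℤ) :
    ∃ P Q : PolyTerm σ, ∀ v, MvPolynomial.eval v W = P.eval v - Q.eval v := by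
  induction W using MvPolynomial.induction_on with
  | C a =>
    refine ⟨ofNat a.toNat, ofNat (-a).toNat, fun v => ?_⟩
    simp only [MvPolynomial.eval_C, eval_ofNat]
    omega
  | add p q hp hq =>
    obtain ⟨P₁, Q₁, h₁⟩ := hp
    obtain ⟨P₂, Q₂, h₂⟩ := hq
    exact ⟨add P₁ P₂, add Q₁ Q₂, fun v => by simp only [map_add, h₁, h₂, eval]; ring⟩
  | mul_X p s hp =>
    obtain ⟨P, Q, h⟩ := hp
    exact ⟨mul P (var s), mul Q (var s), fun v => by
      simp only [map_mul, MvPolynomial.eval_X, h, eval]; ring⟩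

end Eval

section Subterms

variable {σ τ : Type*} [DecidableEq σ]

def subterms : PolyTerm σ → Finset (PolyTerm σ)
  | zero => {zero}
  | one => {one}
  | var s => {var s}
  | add a b => insert (add a b) (a.subterms ∪ b.subterms)
  | mul a b => insert (mul a b) (a.subterms ∪ b.subterms)

lemma mem_subterms_self (t : PolyTerm σ) : t ∈ t.subterms := by
  cases t <;> simp [subterms]

lemma subterms_subset_of_mem {t u : PolyTerm σ} (h : u ∈ t.subterms) :
    u.subterms ⊆ t.subterms := by
  induction t with
  | add a b iha ihb | mul a b iha ihb =>
    simp only [subterms, Finset.mem_insert, Finset.mem_union] at h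
    rcases h with rfl | h | h
    · exact subset_rfl
    · exact (iha h).trans (by simp [subterms, Finset.subset_iff]; tauto)
    · exact (ihb h).trans (by simp [subterms, Finset.subset_iff]; tauto)
  | _ => simp_all [subterms]

lemma subterms_subset_biUnion_subterms {R : Finset (PolyTerm σ)} {u : PolyTerm σ}
    (hu : u ∈ R.biUnion subterms) : u.subterms ⊆ R.biUnion subterms := by
  obtain ⟨t, ht, hut⟩ := Finset.mem_biUnion.1 hu
  exact (subterms_subset_of_mem hut).trans (Finset.subset_biUnion_of_mem _ ht)

lemma subterms_subst_subset [DecidableEq τ] [Fintype σ] (G : σ → PolyTerm τ) (t : PolyTerm σ) :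
    (t.subst G).subterms ⊆
      t.subterms.image (subst G) ∪ Finset.univ.biUnion fun s => (G s).subterms := by
  induction t with
  | var s =>
    exact Finset.subset_union_right.trans'
      (Finset.subset_biUnion_of_mem (fun s => (G s).subterms) (Finset.mem_univ s))
  | add a b iha ihb | mul a b iha ihb =>
    intro u hu
    simp only [subst, subterms, Finset.mem_insert, Finset.mem_union] at hu
    rcases hu with rfl | hu | hu
    · exact Finset.mem_union_left _ (Finset.mem_image_of_mem _ (mem_subterms_self _))
    · exact Finset.union_subset_union_left (Finset.image_subset_image
        (subterms_subset_of_mem (by simp [subterms, mem_subterms_self]))) (iha hu)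
    · exact Finset.union_subset_union_left (Finset.image_subset_image
        (subterms_subset_of_mem (by simp [subterms, mem_subterms_self]))) (ihb hu)
  | _ => simp [subst, subterms]

lemma zero_mem_subterms_ofNat (k : ℕ) : zero ∈ (ofNat k : PolyTerm σ).subterms := by
  induction k <;> simp_all [ofNat, subterms]

lemma card_subterms_ofNat (k : ℕ) : (ofNat k : PolyTerm σ).subterms.card ≤ k + 2 := by
  have h : (ofNat k : PolyTerm σ).subterms ⊆ insert one ((Finset.range (k + 1)).image ofNat) := by
    induction k with
    | zero => simp [ofNat, subterms]
    | succ k ih =>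
      simp only [ofNat, subterms, Finset.insert_subset_iff, Finset.union_subset_iff]
      refine ⟨by simpa using ⟨k + 1, le_rfl, rfl⟩, ih.trans ?_, by simp⟩
      exact Finset.insert_subset_insert _ (Finset.image_subset_image (by simp))
  refine (Finset.card_le_card h).trans ((Finset.card_insert_le _ _).trans ?_)
  simpa using Finset.card_image_le (s := Finset.range (k + 1)) (f := ofNat)

end Subterms

section Circuit

variable {σ : Type*}

/-- `zero` is pinned down by `0 + 0 = 0`, as `E_n` has no equation `x = 0`. -/
def IsNodeEqn : Eqn (PolyTerm σ) → Prop
  | .one i => i = one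
  | .add i j k => k = add i j ∨ (i = zero ∧ j = zero ∧ k = zero)
  | .mul i j k => k = mul i j

def nodeSystem (T : Finset (PolyTerm σ)) : Set (Eqn T) := {e | IsNodeEqn (e.map Subtype.val)}

def constraintSystem (T : Finset (PolyTerm σ)) (P Q : PolyTerm σ) : Set (Eqn T) :=
  nodeSystem T ∪ {e | e.map Subtype.val = .add P zero Q}

lemma eval_mem_solutions_nodeSystem (T : Finset (PolyTerm σ)) (v : σ → ℤ) :
    (fun u : T => u.1.eval v) ∈ solutions (nodeSystem T) := by
  rintro (i | ⟨i, j, k⟩ | ⟨i, j, k⟩) he <;>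
    simp only [nodeSystem, Set.mem_ofPred_eq, IsNodeEqn, Eqn.map] at he
  · simp [Holds, he, eval]
  · rcases he with he | ⟨hi, hj, hk⟩ <;> simp [Holds, eval, *]
  · simp [Holds, he, eval]

variable [DecidableEq σ] {T : Finset (PolyTerm σ)}

lemma eq_eval_of_mem_solutions_nodeSystem (hT : ∀ u ∈ T, u.subterms ⊆ T)
    (hvar : ∀ s, var s ∈ T) {x : T → ℤ} (hx : x ∈ solutions (nodeSystem T)) (u : PolyTerm σ)
    (hu : u ∈ T) : x ⟨u, hu⟩ = u.eval fun s => x ⟨var s, hvar s⟩ := by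
  have hnode (e : Eqn T) (he : IsNodeEqn (e.map Subtype.val)) : e.Holds x := hx e he
  induction u with
  | zero =>
    have := hnode (.add ⟨_, hu⟩ ⟨_, hu⟩ ⟨_, hu⟩) (by simp [Eqn.map, IsNodeEqn])
    simp only [Holds] at this
    simp only [eval]
    omega
  | one => exact hnode (.one ⟨_, hu⟩) rfl
  | var s => rfl
  | add a b iha ihb =>
    have ha : a ∈ T := hT _ hu (by simp [subterms, mem_subterms_self])
    have hb : b ∈ T := hT _ hu (by simp [subterms, mem_subterms_self])
    rw [eval, ← iha ha, ← ihb hb]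
    exact (hnode (.add ⟨a, ha⟩ ⟨b, hb⟩ ⟨_, hu⟩) (by simp [Eqn.map, IsNodeEqn])).symm
  | mul a b iha ihb =>
    have ha : a ∈ T := hT _ hu (by simp [subterms, mem_subterms_self])
    have hb : b ∈ T := hT _ hu (by simp [subterms, mem_subterms_self])
    rw [eval, ← iha ha, ← ihb hb]
    exact (hnode (.mul ⟨a, ha⟩ ⟨b, hb⟩ ⟨_, hu⟩) (by simp [Eqn.map, IsNodeEqn])).symm

variable {P Q : PolyTerm σ}

lemma mem_solutions_constraintSystem_iff (hT : ∀ u ∈ T, u.subterms ⊆ T)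
    (hvar : ∀ s, var s ∈ T) (hP : P ∈ T) (hQ : Q ∈ T) (hzero : zero ∈ T) (x : T → ℤ) :
    x ∈ solutions (constraintSystem T P Q) ↔
      ∃ v : σ → ℤ, P.eval v = Q.eval v ∧ x = fun u => u.1.eval v := by
  constructor
  · intro hx
    rw [constraintSystem, solutions_union] at hx
    obtain ⟨v, hxv⟩ : ∃ v : σ → ℤ, x = fun u => u.1.eval v :=
      ⟨_, funext fun u => eq_eval_of_mem_solutions_nodeSystem hT hvar hx.1 u.1 u.2⟩
    have h := hx.2 (.add ⟨P, hP⟩ ⟨zero, hzero⟩ ⟨Q, hQ⟩) rfl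
    rw [hxv] at h
    exact ⟨v, by simpa [Holds, eval] using h, hxv⟩
  · rintro ⟨v, hv, rfl⟩
    rw [constraintSystem, solutions_union]
    refine ⟨eval_mem_solutions_nodeSystem T v, ?_⟩
    intro e (he : e.map Subtype.val = _)
    have h : (e.map Subtype.val).Holds fun u => u.eval v := by simpa [he, Holds, eval] using hv
    exact (holds_map _ _ _).1 h

lemma abs_eval_le_fBound (hT : ∀ u ∈ T, u.subterms ⊆ T) (hvar : ∀ s, var s ∈ T)
    (hP : P ∈ T) (hQ : Q ∈ T) (hzero : zero ∈ T)
    (hfin : {v : σ → ℤ | P.eval v = Q.eval v}.Finite) {v : σ → ℤ} (hv : P.eval v = Q.eval v)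
    {u : PolyTerm σ} (hu : u ∈ T) : |u.eval v| ≤ fBound T.card := by
  have hsol := mem_solutions_constraintSystem_iff hT hvar hP hQ hzero
  have hS : (solutions (constraintSystem T P Q)).Finite := by
    refine (hfin.image fun v (u : T) => u.1.eval v).subset fun x hx => ?_
    obtain ⟨v, hv, rfl⟩ := (hsol x).1 hx
    exact ⟨v, hv, rfl⟩
  exact abs_le_fBound_of_card_le hS ((hsol _).2 ⟨v, hv, rfl⟩) (by simp) ⟨u, hu⟩

end Circuit

def sumSqTerm {ι : Type*} (g : ι) : PolyTerm (ι × Fin 4) :=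
  add (add (mul (var (g, 0)) (var (g, 0))) (mul (var (g, 1)) (var (g, 1))))
    (add (mul (var (g, 2)) (var (g, 2))) (mul (var (g, 3)) (var (g, 3))))

lemma eval_sumSqTerm {ι : Type*} (g : ι) (v : ι × Fin 4 → ℤ) :
    (sumSqTerm g).eval v = ∑ c, v (g, c) ^ 2 := by
  simp [sumSqTerm, eval, Fin.sum_univ_four, sq, add_assoc]

lemma var_mem_subterms_sumSqTerm {ι : Type*} [DecidableEq ι] (g : ι) (c : Fin 4) :
    var (g, c) ∈ (sumSqTerm g).subterms := by
  fin_cases c <;> simp [sumSqTerm, subterms]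

def sqAddTerm {σ : Type*} (q s : ℕ) : PolyTerm σ := add (mul (ofNat q) (ofNat q)) (ofNat s)

lemma eval_sqAddTerm {σ : Type*} (q s : ℕ) (v : σ → ℤ) :
    (sqAddTerm q s : PolyTerm σ).eval v = (q * q + s : ℕ) := by
  simp [sqAddTerm, eval, eval_ofNat]

lemma card_subterms_sqAddTerm {σ : Type*} [DecidableEq σ] (q s : ℕ) :
    (sqAddTerm q s : PolyTerm σ).subterms.card ≤ q + s + 6 := by
  have hq := card_subterms_ofNat (σ := σ) q
  have hs := card_subterms_ofNat (σ := σ) s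
  simp only [sqAddTerm, subterms, Finset.union_self]
  grw [Finset.card_insert_le, Finset.card_union_le, Finset.card_insert_le, hq, hs]
  omega

end PolyTerm

lemma le_fBound_add_two (k : ℕ) : k ≤ fBound (k + 2) := by
  have hz := PolyTerm.zero_mem_subterms_ofNat (σ := Empty) k
  have h := PolyTerm.abs_eval_le_fBound (fun _ => PolyTerm.subterms_subset_of_mem)
    (fun s => s.elim) hz hz hz (Set.toFinite _) (v := Empty.elim) rfl
    (PolyTerm.mem_subterms_self (.ofNat k))
  rw [PolyTerm.eval_ofNat, Nat.abs_cast, Nat.cast_le] at h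
  exact h.trans (fBound_mono (PolyTerm.card_subterms_ofNat k))

lemma finite_setOf_sum_sq_mem {ι κ : Type*} [Finite ι] [Fintype κ] {F : Set (ι → ℤ)}
    (hF : F.Finite) : {v : ι × κ → ℤ | (fun g => ∑ c, v (g, c) ^ 2) ∈ F}.Finite := by
  obtain ⟨B, hB⟩ := hF.bddAbove
  refine (Set.Finite.pi' fun i : ι × κ => Set.finite_Icc (-B i.1) (B i.1)).subset fun v hv i => ?_
  have h : v i ^ 2 ≤ B i.1 := calc
    v i ^ 2 ≤ ∑ c, v (i.1, c) ^ 2 :=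
      Finset.single_le_sum (fun c _ => sq_nonneg (v (i.1, c))) (Finset.mem_univ i.2)
    _ ≤ B i.1 := hB hv i.1
  rw [Set.mem_Icc, ← abs_le, Int.abs_eq_natAbs]
  exact (Int.natAbs_le_self_sq _).trans h

lemma exists_sum_sq_fin_four_eq (m : ℕ) : ∃ w : Fin 4 → ℤ, ∑ c, w c ^ 2 = m := by
  obtain ⟨a, b, c, d, h⟩ := Nat.sum_four_squares m
  exact ⟨![a, b, c, d], by simp [Fin.sum_univ_four]; exact_mod_cast h⟩

section Reduction

variable {r : ℕ}

noncomputable def evalArgs (W : MvPolynomial (Fin 2 ⊕ Fin r) ℤ) (a b : ℕ) (y : Fin r → ℕ) : ℤ :=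
  eval (Sum.elim ![(a : ℤ), (b : ℤ)] fun j => (y j : ℤ)) W

def sqArgs (n : ℕ) (v : Fin (r + 1) × Fin 4 → ℤ) : Fin 2 ⊕ Fin r → ℤ :=
  Sum.elim ![(n : ℤ), ∑ c, v (0, c) ^ 2] fun j => ∑ c, v (j.succ, c) ^ 2

def PolyTerm.argTerm (t : PolyTerm (Fin (r + 1) × Fin 4)) :
    Fin 2 ⊕ Fin r → PolyTerm (Fin (r + 1) × Fin 4) :=
  Sum.elim ![t, .sumSqTerm 0] fun j => .sumSqTerm j.succ

open PolyTerm

lemma PolyTerm.eval_argTerm {t : PolyTerm (Fin (r + 1) × Fin 4)} {n : ℕ}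
    (ht : ∀ v, t.eval v = n) (v : Fin (r + 1) × Fin 4 → ℤ) :
    (fun s => (t.argTerm s).eval v) = sqArgs n v := by
  funext s
  rcases s with i | j
  · fin_cases i <;> simp [argTerm, sqArgs, ht, eval_sumSqTerm]
  · simp [argTerm, sqArgs, eval_sumSqTerm]

lemma PolyTerm.subterms_argTerm_subset (t : PolyTerm (Fin (r + 1) × Fin 4)) (s : Fin 2 ⊕ Fin r) :
    (t.argTerm s).subterms ⊆
      t.subterms ∪ Finset.univ.biUnion fun g => (sumSqTerm g).subterms := by
  have hsq (g : Fin (r + 1)) :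
      (sumSqTerm g).subterms ⊆ Finset.univ.biUnion fun g => (sumSqTerm g).subterms :=
    Finset.subset_biUnion_of_mem (fun g => (sumSqTerm g).subterms) (Finset.mem_univ g)
  rcases s with i | j
  · fin_cases i
    · exact Finset.subset_union_left
    · exact (hsq 0).trans Finset.subset_union_right
  · exact (hsq j.succ).trans Finset.subset_union_right

variable {W : MvPolynomial (Fin 2 ⊕ Fin r) ℤ}

lemma eval_sqArgs_eq_evalArgs {n : ℕ} {v : Fin (r + 1) × Fin 4 → ℤ} {z : Fin (r + 1) → ℕ}
    (hz : ∀ g, ∑ c, v (g, c) ^ 2 = z g) :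
    MvPolynomial.eval (sqArgs n v) W = evalArgs W n (z 0) fun j => z j.succ := by
  simp only [sqArgs, evalArgs, hz]

lemma finite_setOf_eval_sqArgs
    (hrep : ∀ a b : ℕ, (1 ≤ a ∧ b = fBound a) ↔ ∃ y, evalArgs W a b y = 0)
    (hfin : ∀ a b : ℕ, {y | evalArgs W a b y = 0}.Finite) (n : ℕ) :
    {v | MvPolynomial.eval (sqArgs n v) W = 0}.Finite := by
  refine (finite_setOf_sum_sq_mem ((hfin n (fBound n)).image fun y =>
    (Fin.cons (fBound n : ℤ) fun j => (y j : ℤ) : Fin (r + 1) → ℤ))).subset fun v hv => ?_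
  set z : Fin (r + 1) → ℕ := fun g => (∑ c, v (g, c) ^ 2).toNat
  have hz (g : Fin (r + 1)) : ∑ c, v (g, c) ^ 2 = z g := (Int.toNat_of_nonneg (by positivity)).symm
  rw [Set.mem_ofPred_eq, eval_sqArgs_eq_evalArgs hz] at hv
  have hb : z 0 = fBound n := ((hrep n (z 0)).2 ⟨_, hv⟩).2
  refine ⟨fun j => z j.succ, by rwa [Set.mem_ofPred_eq, ← hb], funext fun g => ?_⟩
  cases g using Fin.cases <;> simp [hz, hb]

lemma exists_eval_sqArgs_eq_zero
    (hrep : ∀ a b : ℕ, (1 ≤ a ∧ b = fBound a) ↔ ∃ y, evalArgs W a b y = 0) {n : ℕ} (hn : 1 ≤ n) :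
    ∃ v, MvPolynomial.eval (sqArgs n v) W = 0 ∧ ∑ c, v (0, c) ^ 2 = fBound n := by
  obtain ⟨y, hy⟩ := (hrep n (fBound n)).1 ⟨hn, rfl⟩
  choose w hw using fun g => exists_sum_sq_fin_four_eq ((Fin.cons (fBound n) y : Fin (r + 1) → ℕ) g)
  refine ⟨fun i => w i.1 i.2, ?_, by simpa using hw 0⟩
  rw [eval_sqArgs_eq_evalArgs hw]
  simpa using hy

def PolyTerm.circuitRoots (P₀ Q₀ : PolyTerm (Fin 2 ⊕ Fin r)) (t : PolyTerm (Fin (r + 1) × Fin 4)) :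
    Finset (PolyTerm (Fin (r + 1) × Fin 4)) :=
  insert (P₀.subst t.argTerm) (insert (Q₀.subst t.argTerm)
    (insert zero (Finset.univ.image sumSqTerm)))

lemma PolyTerm.exists_card_biUnion_circuitRoots_le (P₀ Q₀ : PolyTerm (Fin 2 ⊕ Fin r)) :
    ∃ C : ℕ, ∀ t : PolyTerm (Fin (r + 1) × Fin 4),
      ((circuitRoots P₀ Q₀ t).biUnion subterms).card ≤ C + t.subterms.card := by
  set sq := Finset.univ.biUnion fun g : Fin (r + 1) => (sumSqTerm g).subterms
  refine ⟨P₀.subterms.card + Q₀.subterms.card + (insert zero sq).card, fun t => ?_⟩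
  have hsubst (P₁ : PolyTerm (Fin 2 ⊕ Fin r)) {w} (hw : w ∈ (P₁.subst t.argTerm).subterms) :
      w ∈ P₁.subterms.image (subst t.argTerm) ∨ w ∈ t.subterms ∨ w ∈ sq := by
    rcases Finset.mem_union.1 (subterms_subst_subset _ _ hw) with h | h
    · exact .inl h
    · obtain ⟨s, -, hs⟩ := Finset.mem_biUnion.1 h
      exact .inr (Finset.mem_union.1 (subterms_argTerm_subset t s hs))
  have hsub : (circuitRoots P₀ Q₀ t).biUnion subterms ⊆ P₀.subterms.image (subst t.argTerm) ∪
      Q₀.subterms.image (subst t.argTerm) ∪ insert zero sq ∪ t.subterms := by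
    refine Finset.biUnion_subset.2 fun u hu w hw => ?_
    simp only [circuitRoots, Finset.mem_insert, Finset.mem_image, Finset.mem_univ,
      true_and] at hu
    rcases hu with rfl | rfl | rfl | ⟨g, rfl⟩
    · rcases hsubst P₀ hw with h | h | h <;> simp [h]
    · rcases hsubst Q₀ hw with h | h | h <;> simp [h]
    · simp_all [subterms]
    · have h : w ∈ sq :=
        Finset.subset_biUnion_of_mem (fun g => (sumSqTerm g).subterms) (Finset.mem_univ g) hw
      simp [h]
  grw [hsub, Finset.card_union_le, Finset.card_union_le, Finset.card_union_le,
    Finset.card_image_le, Finset.card_image_le]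

lemma exists_fBound_le_fBound_add_card
    (hrep : ∀ a b : ℕ, (1 ≤ a ∧ b = fBound a) ↔ ∃ y, evalArgs W a b y = 0)
    (hfin : ∀ a b : ℕ, {y | evalArgs W a b y = 0}.Finite) :
    ∃ C : ℕ, ∀ n : ℕ, 1 ≤ n → ∀ t : PolyTerm (Fin (r + 1) × Fin 4), (∀ v, t.eval v = n) →
      fBound n ≤ fBound (C + t.subterms.card) := by
  obtain ⟨P₀, Q₀, hPQ₀⟩ := exists_eval_eq_sub W
  obtain ⟨C, hC⟩ := exists_card_biUnion_circuitRoots_le P₀ Q₀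
  refine ⟨C, fun n hn t ht => ?_⟩
  set R := circuitRoots P₀ Q₀ t
  have hR {u w : PolyTerm (Fin (r + 1) × Fin 4)} (hu : u ∈ R) (hw : w ∈ u.subterms) :
      w ∈ R.biUnion subterms :=
    Finset.mem_biUnion.2 ⟨u, hu, hw⟩
  have hPQ (v) : (P₀.subst t.argTerm).eval v = (Q₀.subst t.argTerm).eval v ↔
      MvPolynomial.eval (sqArgs n v) W = 0 := by
    rw [eval_subst, eval_subst, eval_argTerm ht, hPQ₀, sub_eq_zero]
  obtain ⟨v, hv, hb⟩ := exists_eval_sqArgs_eq_zero hrep hn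
  have h := abs_eval_le_fBound (fun _ => subterms_subset_biUnion_subterms)
    (fun s => hR (by simp [R, circuitRoots]) (var_mem_subterms_sumSqTerm s.1 s.2))
    (hR (by simp [R, circuitRoots]) (mem_subterms_self _))
    (hR (by simp [R, circuitRoots]) (mem_subterms_self _))
    (hR (by simp [R, circuitRoots]) (mem_subterms_self zero))
    (by simpa only [hPQ] using finite_setOf_eval_sqArgs hrep hfin n) ((hPQ v).2 hv)
    (hR (by simp [R, circuitRoots]) (mem_subterms_self (sumSqTerm 0)))
  rw [eval_sumSqTerm, hb, Nat.abs_cast, Nat.cast_le] at h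
  exact h.trans (fBound_mono (hC t))

lemma exists_forall_lt_exists_lt_fBound_le
    (hrep : ∀ a b : ℕ, (1 ≤ a ∧ b = fBound a) ↔ ∃ y, evalArgs W a b y = 0)
    (hfin : ∀ a b : ℕ, {y | evalArgs W a b y = 0}.Finite) :
    ∃ n₀, ∀ n, n₀ < n → ∃ m < n, fBound n ≤ fBound m := by
  obtain ⟨C, hC⟩ := exists_fBound_le_fBound_add_card hrep hfin
  refine ⟨(C + 7) * (C + 7), fun n hn => ?_⟩
  set q := Nat.sqrt n
  have hq : C + 7 ≤ q := Nat.le_sqrt.2 hn.le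
  have hn' : q * q + (n - q * q) = n := Nat.add_sub_cancel' (Nat.sqrt_le n)
  -- `C + q + 6 < q * q` as soon as `q ≥ C + 7`
  refine ⟨C + (q + (n - q * q) + 6), by nlinarith, ?_⟩
  refine (hC n (by nlinarith) (sqAddTerm q (n - q * q)) (by simp [eval_sqAddTerm, hn'])).trans ?_
  exact fBound_mono (by grw [card_subterms_sqAddTerm])

end Reduction

lemma Monotone.le_of_forall_lt_exists_lt_le {f : ℕ → ℕ} (hf : Monotone f) {n₀ : ℕ}
    (h : ∀ n, n₀ < n → ∃ m < n, f n ≤ f m) (n : ℕ) : f n ≤ f n₀ := by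
  induction n using Nat.strong_induction_on with
  | _ n ih =>
    rcases le_or_gt n n₀ with hn | hn
    · exact hf hn
    · obtain ⟨m, hm, hfm⟩ := h n hn
      exact hfm.trans (ih m hm)

/-- there is no finite-fold Diophantine representation of `f`. -/
theorem stmt2 :
    ¬ ∃ (r : ℕ) (W : MvPolynomial (Fin 2 ⊕ Fin r) ℤ),
      (∀ a b : ℕ,
        (1 ≤ a ∧ b = fBound a) ↔
          ∃ y : Fin r → ℕ,
            eval (Sum.elim ![(a : ℤ), (b : ℤ)] fun j => (y j : ℤ)) W = 0) ∧
      (∀ a b : ℕ,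
        {y : Fin r → ℕ |
          eval (Sum.elim ![(a : ℤ), (b : ℤ)] fun j => (y j : ℤ)) W = 0}.Finite) := by
  rintro ⟨r, W, hrep, hfin⟩
  obtain ⟨n₀, hn₀⟩ := exists_forall_lt_exists_lt_fBound_le hrep hfin
  have hbdd := fBound_mono.le_of_forall_lt_exists_lt_le hn₀ (fBound n₀ + 1 + 2)
  have hunbdd := le_fBound_add_two (fBound n₀ + 1)
  omega
end
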